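/- arXiv:2305.17899 — 4 statements merged into one kernel-verified Lean document; each statement's English description precedes it below -/
import Mathlib

section
/- For any α, β, F ∈ ℂ, the assignments L_m · G_n = −(α+n+mβ)G_{m+n}, J_m · G_n = F G_{m+n}, and C₁ · G_n = C₂ · G_n = C₃ · G_n = 0 (for all m, n ∈ ℤ) define a Lie module structure over the twisted Heisenberg–Virasoro algebra 𝓛 on the complex vector space V_{α,β,F} with basis {G_n : n ∈ ℤ}; that is, [x, y] · v = x · (y · v) − y · (x · v) for all x, y ∈ 𝓛 and v ∈ V_{α,β,F}. -/
noncomputable section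

/-- The combined family consisting of the vectors `L m`, `J m` (`m : ℤ`) and
`C₁`, `C₂`, `C₃` in a candidate twisted Heisenberg–Virasoro algebra. -/
def thvFam {𝓛 : Type*} (Lg Jg : ℤ → 𝓛) (C1 C2 C3 : 𝓛) :
    (Fin 2 × ℤ) ⊕ Fin 3 → 𝓛 :=
  Sum.elim (fun p => ![Lg, Jg] p.1 p.2) ![C1, C2, C3]

/-- A complex Lie algebra `𝓛`, equipped with distinguished elements `Lg m`, `Jg m`
(`m : ℤ`) and `C1`, `C2`, `C3`, is a realization of the twisted Heisenberg–Virasoro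
algebra if these elements form a basis, `C1`, `C2`, `C3` are central, and the defining
bracket relations hold. -/
structure IsTwistedHV {𝓛 : Type*} [LieRing 𝓛] [LieAlgebra ℂ 𝓛]
    (Lg Jg : ℤ → 𝓛) (C1 C2 C3 : 𝓛) : Prop where
  lie_LL : ∀ m n : ℤ, ⁅Lg m, Lg n⁆ =
      ((m : ℂ) - (n : ℂ)) • Lg (m + n) +
        (if m + n = 0 then (((m : ℂ) ^ 3 - (m : ℂ)) / 12) • C1 else 0)
  lie_LJ : ∀ m n : ℤ, ⁅Lg m, Jg n⁆ =
      (-(n : ℂ)) • Jg (m + n) -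
        (if m + n = 0 then ((m : ℂ) ^ 2 + (m : ℂ)) • C2 else 0)
  lie_JJ : ∀ m n : ℤ, ⁅Jg m, Jg n⁆ = (if m + n = 0 then (m : ℂ) • C3 else 0)
  central_C1 : ∀ x : 𝓛, ⁅C1, x⁆ = 0
  central_C2 : ∀ x : 𝓛, ⁅C2, x⁆ = 0
  central_C3 : ∀ x : 𝓛, ⁅C3, x⁆ = 0
  basis_indep : LinearIndependent ℂ (thvFam Lg Jg C1 C2 C3)
  basis_span : Submodule.span ℂ (Set.range (thvFam Lg Jg C1 C2 C3)) = ⊤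

/-!
The action is defined on the basis of `𝓛`, sending `L m` and `J m` to the shift operators
`G k ↦ c(k) G (m + k)` with the given coefficients and the centre to `0`. Both sides of
`ρ ⁅x, y⁆ = ⁅ρ x, ρ y⁆` are bilinear, so it suffices to check basis pairs. Pairs involving the
centre are trivial, and since the central terms of the brackets act by `0`, the remaining ones
reduce to the commutator formula for shift operators,
`⁅shift m a, shift n b⁆ = shift (m + n) (k ↦ a (n + k) b k - b (m + k) a k)`,
and a polynomial identity in `α`, `β`, `F`, `m`, `n`, `k`.
-/

theorem LinearMap.map_lie_of_basis {R L L' ι : Type*} [CommRing R] [LieRing L]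
    [LieAlgebra R L] [LieRing L'] [LieAlgebra R L'] (ρ : L →ₗ[R] L') (b : Module.Basis ι R L)
    (h : ∀ i j, ρ ⁅b i, b j⁆ = ⁅ρ (b i), ρ (b j)⁆) (x y : L) : ρ ⁅x, y⁆ = ⁅ρ x, ρ y⁆ := by
  have hbilin := LinearMap.ext_basis b b
    (B := (LieModule.toEnd R L L : L →ₗ[R] Module.End R L).compr₂ ρ)
    (B' := (LieModule.toEnd R L' L' : L' →ₗ[R] Module.End R L').compl₁₂ ρ ρ) (by simpa using h)
  simpa using LinearMap.congr_fun₂ hbilin x y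

open Finsupp

section ShiftOp

variable {R : Type*} [CommRing R]

def shiftOp (m : ℤ) (c : ℤ → R) : Module.End R (ℤ →₀ R) :=
  linearCombination R fun k => single (m + k) (c k)

theorem shiftOp_single (m : ℤ) (c : ℤ → R) (k : ℤ) (r : R) :
    shiftOp m c (single k r) = single (m + k) (c k * r) := by
  simp [shiftOp, smul_single, mul_comm]

theorem lie_shiftOp (m n : ℤ) (a b : ℤ → R) :
    ⁅shiftOp m a, shiftOp n b⁆ =
      shiftOp (m + n) fun k => a (n + k) * b k - b (m + k) * a k := by
  refine lhom_ext fun k r => ?_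
  simp only [Ring.lie_def, LinearMap.sub_apply, Module.End.mul_apply, shiftOp_single,
    ← single_sub, add_left_comm m n k, ← add_assoc]
  congr 1 <;> ring

theorem smul_shiftOp (r : R) (m : ℤ) (c : ℤ → R) : r • shiftOp m c = shiftOp m (r • c) :=
  lhom_ext fun k s => by
    simp only [LinearMap.smul_apply, shiftOp_single, smul_single, Pi.smul_apply, smul_eq_mul,
      mul_assoc]

theorem shiftOp_zero (m : ℤ) : shiftOp m (0 : ℤ → R) = 0 :=
  lhom_ext fun k s => by simp [shiftOp_single]

def intermediateSeriesL (α β : R) (m : ℤ) : Module.End R (ℤ →₀ R) :=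
  shiftOp m fun n => -(α + n + m * β)

def intermediateSeriesJ (F : R) (m : ℤ) : Module.End R (ℤ →₀ R) :=
  shiftOp m fun _ => F

variable (α β F : R) (m n : ℤ)

theorem intermediateSeriesL_single :
    intermediateSeriesL α β m (single n 1) = (-(α + n + m * β)) • single (m + n) 1 := by
  rw [intermediateSeriesL, shiftOp_single, mul_one, smul_single_one]

theorem intermediateSeriesJ_single :
    intermediateSeriesJ F m (single n 1) = F • single (m + n) 1 := by
  rw [intermediateSeriesJ, shiftOp_single, mul_one, smul_single_one]

theorem lie_intermediateSeriesL_intermediateSeriesL :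
    ⁅intermediateSeriesL α β m, intermediateSeriesL α β n⁆ =
      ((m : R) - n) • intermediateSeriesL α β (m + n) := by
  rw [intermediateSeriesL, intermediateSeriesL, intermediateSeriesL, lie_shiftOp, smul_shiftOp]
  congr 1
  funext k
  simp only [Pi.smul_apply, smul_eq_mul, Int.cast_add]
  ring

theorem lie_intermediateSeriesL_intermediateSeriesJ :
    ⁅intermediateSeriesL α β m, intermediateSeriesJ F n⁆ =
      (-(n : R)) • intermediateSeriesJ F (m + n) := by
  rw [intermediateSeriesL, intermediateSeriesJ, intermediateSeriesJ, lie_shiftOp, smul_shiftOp]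
  congr 1
  funext k
  simp only [Pi.smul_apply, smul_eq_mul, Int.cast_add]
  ring

theorem lie_intermediateSeriesJ_intermediateSeriesJ :
    ⁅intermediateSeriesJ F m, intermediateSeriesJ F n⁆ = 0 := by
  rw [intermediateSeriesJ, intermediateSeriesJ, lie_shiftOp, sub_self]
  exact shiftOp_zero (m + n)

end ShiftOp

namespace IsTwistedHV

variable {𝓛 : Type*} [LieRing 𝓛] [LieAlgebra ℂ 𝓛] {Lg Jg : ℤ → 𝓛} {C1 C2 C3 : 𝓛}

def basis (h : IsTwistedHV Lg Jg C1 C2 C3) : Module.Basis ((Fin 2 × ℤ) ⊕ Fin 3) ℂ 𝓛 :=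
  .mk h.basis_indep h.basis_span.ge

theorem basis_apply (h : IsTwistedHV Lg Jg C1 C2 C3) (i : (Fin 2 × ℤ) ⊕ Fin 3) :
    h.basis i = thvFam Lg Jg C1 C2 C3 i :=
  Module.Basis.mk_apply _ _ i

theorem map_lie {L' : Type*} [LieRing L'] [LieAlgebra ℂ L'] (h : IsTwistedHV Lg Jg C1 C2 C3)
    (ρ : 𝓛 →ₗ[ℂ] L') (hC1 : ρ C1 = 0) (hC2 : ρ C2 = 0) (hC3 : ρ C3 = 0)
    (hLL : ∀ m n : ℤ, ⁅ρ (Lg m), ρ (Lg n)⁆ = ((m : ℂ) - n) • ρ (Lg (m + n)))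
    (hLJ : ∀ m n : ℤ, ⁅ρ (Lg m), ρ (Jg n)⁆ = (-(n : ℂ)) • ρ (Jg (m + n)))
    (hJJ : ∀ m n : ℤ, ⁅ρ (Jg m), ρ (Jg n)⁆ = 0) (x y : 𝓛) :
    ρ ⁅x, y⁆ = ⁅ρ x, ρ y⁆ := by
  have hkill : ∀ j, ρ (![C1, C2, C3] j) = 0 := by
    intro j
    fin_cases j
    exacts [hC1, hC2, hC3]
  have hcentral : ∀ j (z : 𝓛), ⁅![C1, C2, C3] j, z⁆ = 0 := by
    intro j z
    fin_cases j
    exacts [h.central_C1 z, h.central_C2 z, h.central_C3 z]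
  have hcentral' : ∀ j (z : 𝓛), ⁅z, ![C1, C2, C3] j⁆ = 0 := fun j z => by
    rw [← lie_skew, hcentral, neg_zero]
  refine ρ.map_lie_of_basis h.basis ?_ x y
  rintro (⟨a, m⟩ | i) (⟨b, n⟩ | j) <;>
    simp only [basis_apply, thvFam, Sum.elim_inl, Sum.elim_inr, hcentral, hcentral', hkill,
      map_zero, lie_zero, zero_lie]
  fin_cases a <;> fin_cases b
  · show ρ ⁅Lg m, Lg n⁆ = ⁅ρ (Lg m), ρ (Lg n)⁆
    rw [h.lie_LL, hLL, map_add, map_smul]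
    split_ifs <;> simp [hC1]
  · show ρ ⁅Lg m, Jg n⁆ = ⁅ρ (Lg m), ρ (Jg n)⁆
    rw [h.lie_LJ, hLJ, map_sub, map_smul]
    split_ifs <;> simp [hC2]
  · show ρ ⁅Jg m, Lg n⁆ = ⁅ρ (Jg m), ρ (Lg n)⁆
    rw [← lie_skew, h.lie_LJ, ← lie_skew (ρ _), hLJ, map_neg, map_sub, map_smul]
    split_ifs <;> simp [hC2]
  · show ρ ⁅Jg m, Jg n⁆ = ⁅ρ (Jg m), ρ (Jg n)⁆
    rw [h.lie_JJ, hJJ]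
    split_ifs <;> simp [hC3]

end IsTwistedHV

attribute [local instance] LieRing.ofAssociativeRing

/-- For any `α, β, F ∈ ℂ`, the assignments
`L m · G n = −(α+n+mβ) G (m+n)`, `J m · G n = F G (m+n)` and
`C₁ · G n = C₂ · G n = C₃ · G n = 0` define a Lie module structure over the twisted
Heisenberg–Virasoro algebra `𝓛` on the complex vector space `V_{α,β,F}` with basis
`{G n : n ∈ ℤ}` (realized as `ℤ →₀ ℂ` with `G n := Finsupp.single n 1`); that is, there
is a linear action `ρ` with these values on basis vectors satisfying
`ρ ⁅x, y⁆ v = ρ x (ρ y v) − ρ y (ρ x v)` for all `x y : 𝓛` and `v`. -/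
theorem twistedHV_intermediate_series_module {𝓛 : Type*} [LieRing 𝓛] [LieAlgebra ℂ 𝓛]
    (Lg Jg : ℤ → 𝓛) (C1 C2 C3 : 𝓛) (h : IsTwistedHV Lg Jg C1 C2 C3)
    (α β F : ℂ) :
    ∃ ρ : 𝓛 →ₗ[ℂ] Module.End ℂ (ℤ →₀ ℂ),
      (∀ m n : ℤ, ρ (Lg m) (Finsupp.single n (1 : ℂ)) =
          (-(α + (n : ℂ) + (m : ℂ) * β)) • Finsupp.single (m + n) (1 : ℂ)) ∧
      (∀ m n : ℤ, ρ (Jg m) (Finsupp.single n (1 : ℂ)) =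
          F • Finsupp.single (m + n) (1 : ℂ)) ∧
      (∀ n : ℤ, ρ C1 (Finsupp.single n (1 : ℂ)) = 0 ∧
          ρ C2 (Finsupp.single n (1 : ℂ)) = 0 ∧
          ρ C3 (Finsupp.single n (1 : ℂ)) = 0) ∧
      (∀ (x y : 𝓛) (v : ℤ →₀ ℂ), ρ ⁅x, y⁆ v = ρ x (ρ y v) - ρ y (ρ x v)) := by
  let ρ := h.basis.constr ℂ
    (Sum.elim (fun p => ![intermediateSeriesL α β, intermediateSeriesJ F] p.1 p.2) 0)
  have hρ : ∀ i, ρ (thvFam Lg Jg C1 C2 C3 i) = _ := fun i => by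
    rw [← h.basis_apply, h.basis.constr_basis]
  have hL : ∀ m, ρ (Lg m) = intermediateSeriesL α β m := fun m => hρ (.inl (0, m))
  have hJ : ∀ m, ρ (Jg m) = intermediateSeriesJ F m := fun m => hρ (.inl (1, m))
  have hC1 : ρ C1 = 0 := hρ (.inr 0)
  have hC2 : ρ C2 = 0 := hρ (.inr 1)
  have hC3 : ρ C3 = 0 := hρ (.inr 2)
  have hlie : ∀ x y, ρ ⁅x, y⁆ = ⁅ρ x, ρ y⁆ := by
    refine h.map_lie ρ hC1 hC2 hC3 (fun m n => ?_) (fun m n => ?_) (fun m n => ?_)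
    · rw [hL, hL, hL, lie_intermediateSeriesL_intermediateSeriesL]
    · rw [hL, hJ, hJ, lie_intermediateSeriesL_intermediateSeriesJ]
    · rw [hJ, hJ, lie_intermediateSeriesJ_intermediateSeriesJ]
  refine ⟨ρ, fun m n => ?_, fun m n => ?_, fun n => ?_, fun x y v => ?_⟩
  · rw [hL, intermediateSeriesL_single]
  · rw [hJ, intermediateSeriesJ_single]
  · simp only [hC1, hC2, hC3, LinearMap.zero_apply, and_self]
  · rw [hlie, Ring.lie_def, LinearMap.sub_apply, Module.End.mul_apply, Module.End.mul_apply]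
end
end

section
/- Suppose α ∈ ℂ and α ∉ ℤ. Then the linear map φ₂ : 𝔏_{α,0,0} → 𝔏_{α,1,0} defined by φ₂(C_i) = C_i for i = 1, 2, 3 and φ₂(L_m) = L_m, φ₂(J_m) = J_m, φ₂(G_m) = (α+m)G_m for m ∈ ℤ is an isomorphism of Lie algebras. -/
noncomputable section

open scoped BigOperators

/-- The combined family consisting of the vectors `L m`, `J m`, `G m` (`m : ℤ`) and
`C₁`, `C₂`, `C₃` in a candidate extended Heisenberg–Virasoro algebra. -/
def ehvFam {𝔏 : Type*} (Lg Jg Gg : ℤ → 𝔏) (C1 C2 C3 : 𝔏) :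
    (Fin 3 × ℤ) ⊕ Fin 3 → 𝔏 :=
  Sum.elim (fun p => ![Lg, Jg, Gg] p.1 p.2) ![C1, C2, C3]

/-- A complex Lie algebra `𝔏`, equipped with distinguished elements
`Lg m`, `Jg m`, `Gg m` (`m : ℤ`) and `C1`, `C2`, `C3`, is a realization of the extended
Heisenberg–Virasoro algebra `𝔏_{α,β,F}` if these elements form a basis, the elements
`C1`, `C2`, `C3` are central, and the defining bracket relations hold. -/
structure IsExtHV {𝔏 : Type*} [LieRing 𝔏] [LieAlgebra ℂ 𝔏]
    (α β F : ℂ) (Lg Jg Gg : ℤ → 𝔏) (C1 C2 C3 : 𝔏) : Prop where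
  lie_LL : ∀ m n : ℤ, ⁅Lg m, Lg n⁆ =
      ((m : ℂ) - (n : ℂ)) • Lg (m + n) +
        (if m + n = 0 then (((m : ℂ) ^ 3 - (m : ℂ)) / 12) • C1 else 0)
  lie_LJ : ∀ m n : ℤ, ⁅Lg m, Jg n⁆ =
      (-(n : ℂ)) • Jg (m + n) -
        (if m + n = 0 then ((m : ℂ) ^ 2 + (m : ℂ)) • C2 else 0)
  lie_JJ : ∀ m n : ℤ, ⁅Jg m, Jg n⁆ = (if m + n = 0 then (m : ℂ) • C3 else 0)
  lie_LG : ∀ m n : ℤ, ⁅Lg m, Gg n⁆ = (-(α + (n : ℂ) + (m : ℂ) * β)) • Gg (m + n)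
  lie_JG : ∀ m n : ℤ, ⁅Jg m, Gg n⁆ = F • Gg (m + n)
  lie_GG : ∀ m n : ℤ, ⁅Gg m, Gg n⁆ = 0
  central_C1 : ∀ x : 𝔏, ⁅C1, x⁆ = 0
  central_C2 : ∀ x : 𝔏, ⁅C2, x⁆ = 0
  central_C3 : ∀ x : 𝔏, ⁅C3, x⁆ = 0
  basis_indep : LinearIndependent ℂ (ehvFam Lg Jg Gg C1 C2 C3)
  basis_span : Submodule.span ℂ (Set.range (ehvFam Lg Jg Gg C1 C2 C3)) = ⊤

/-! Rescaling `G m ↦ (α + m) • G m` (invertible since `α ∉ ℤ`) turns the relation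
`⁅L m, G n⁆ = -(α + n + m) • G (m + n)` of `𝔏_{α,1,0}` into `⁅L m, G n⁆ = -(α + n) • G (m + n)`,
the one of `𝔏_{α,0,0}`, and leaves all other relations unchanged. Two realizations with the
same structure constants are isomorphic through the linear map matching their bases, since a
linear map that preserves brackets of basis vectors is a Lie algebra morphism. -/

theorem LinearMap.map_lie_of_span_eq_top {R L L' : Type*} [CommRing R] [LieRing L]
    [LieAlgebra R L] [LieRing L'] [LieAlgebra R L'] {s : Set L}
    (hs : Submodule.span R s = ⊤) (f : L →ₗ[R] L')
    (hf : ∀ x ∈ s, ∀ y ∈ s, f ⁅x, y⁆ = ⁅f x, f y⁆) (x y : L) :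
    f ⁅x, y⁆ = ⁅f x, f y⁆ := by
  have key : (LieModule.toEnd R L L : L →ₗ[R] Module.End R L).compr₂ f =
      (LieModule.toEnd R L' L' : L' →ₗ[R] Module.End R L').compl₁₂ f f :=
    LinearMap.ext_on hs fun x hx => LinearMap.ext_on hs fun y hy => hf x hx y hy
  simpa using LinearMap.congr_fun₂ key x y

theorem LinearMap.map_lie_swap {R L L' : Type*} [CommRing R] [LieRing L] [LieAlgebra R L]
    [LieRing L'] [LieAlgebra R L'] (f : L →ₗ[R] L') {x y : L} (h : f ⁅x, y⁆ = ⁅f x, f y⁆) :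
    f ⁅y, x⁆ = ⁅f y, f x⁆ := by
  rw [← lie_skew, map_neg, h, lie_skew]

theorem ehvFam_smul_ehvFam {R M : Type*} [SMul R M] (a b c : ℤ → R) (d₁ d₂ d₃ : R)
    (Lg Jg Gg : ℤ → M) (C1 C2 C3 : M) :
    ehvFam a b c d₁ d₂ d₃ • ehvFam Lg Jg Gg C1 C2 C3 =
      ehvFam (fun m => a m • Lg m) (fun m => b m • Jg m) (fun m => c m • Gg m)
        (d₁ • C1) (d₂ • C2) (d₃ • C3) := by
  funext i
  rcases i with ⟨k, m⟩ | k <;> fin_cases k <;> rfl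

namespace IsExtHV

variable {𝔏 𝔏' : Type*} [LieRing 𝔏] [LieAlgebra ℂ 𝔏] [LieRing 𝔏'] [LieAlgebra ℂ 𝔏']
  {α β F : ℂ} {Lg Jg Gg : ℤ → 𝔏} {C1 C2 C3 : 𝔏} {Lg' Jg' Gg' : ℤ → 𝔏'} {C1' C2' C3' : 𝔏'}

def basis (h : IsExtHV α β F Lg Jg Gg C1 C2 C3) :
    Module.Basis ((Fin 3 × ℤ) ⊕ Fin 3) ℂ 𝔏 :=
  .mk h.basis_indep h.basis_span.ge

theorem coe_basis (h : IsExtHV α β F Lg Jg Gg C1 C2 C3) :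
    ⇑h.basis = ehvFam Lg Jg Gg C1 C2 C3 :=
  Module.Basis.coe_mk _ _

def linearEquiv (h : IsExtHV α β F Lg Jg Gg C1 C2 C3)
    (h' : IsExtHV α β F Lg' Jg' Gg' C1' C2' C3') : 𝔏 ≃ₗ[ℂ] 𝔏' :=
  h.basis.equiv h'.basis (Equiv.refl _)

theorem linearEquiv_ehvFam (h : IsExtHV α β F Lg Jg Gg C1 C2 C3)
    (h' : IsExtHV α β F Lg' Jg' Gg' C1' C2' C3') (i) :
    h.linearEquiv h' (ehvFam Lg Jg Gg C1 C2 C3 i) = ehvFam Lg' Jg' Gg' C1' C2' C3' i := by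
  rw [← h.coe_basis, ← h'.coe_basis]
  exact h.basis.equiv_apply _ _ _

section linearEquiv

variable (h : IsExtHV α β F Lg Jg Gg C1 C2 C3) (h' : IsExtHV α β F Lg' Jg' Gg' C1' C2' C3')

@[simp]
theorem linearEquiv_L (m : ℤ) : h.linearEquiv h' (Lg m) = Lg' m :=
  h.linearEquiv_ehvFam h' (.inl (0, m))

@[simp]
theorem linearEquiv_J (m : ℤ) : h.linearEquiv h' (Jg m) = Jg' m :=
  h.linearEquiv_ehvFam h' (.inl (1, m))

@[simp]
theorem linearEquiv_G (m : ℤ) : h.linearEquiv h' (Gg m) = Gg' m :=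
  h.linearEquiv_ehvFam h' (.inl (2, m))

@[simp]
theorem linearEquiv_C1 : h.linearEquiv h' C1 = C1' := h.linearEquiv_ehvFam h' (.inr 0)

@[simp]
theorem linearEquiv_C2 : h.linearEquiv h' C2 = C2' := h.linearEquiv_ehvFam h' (.inr 1)

@[simp]
theorem linearEquiv_C3 : h.linearEquiv h' C3 = C3' := h.linearEquiv_ehvFam h' (.inr 2)

theorem linearEquiv_map_lie (x y : 𝔏) :
    h.linearEquiv h' ⁅x, y⁆ = ⁅h.linearEquiv h' x, h.linearEquiv h' y⁆ := by
  refine (h.linearEquiv h' : 𝔏 →ₗ[ℂ] 𝔏').map_lie_of_span_eq_top h.basis_span ?_ x y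
  rintro _ ⟨i, rfl⟩ _ ⟨j, rfl⟩
  rcases i with ⟨k, m⟩ | k <;> rcases j with ⟨l, n⟩ | l <;> fin_cases k <;> fin_cases l
  -- the pairs not covered by a defining relation are its reversals
  all_goals first
    | simp [ehvFam, apply_ite (h.linearEquiv h'), h.lie_LL, h'.lie_LL, h.lie_LJ, h'.lie_LJ,
        h.lie_JJ, h'.lie_JJ, h.lie_LG, h'.lie_LG, h.lie_JG, h'.lie_JG, h.lie_GG, h'.lie_GG,
        h.central_C1, h'.central_C1, h.central_C2, h'.central_C2, h.central_C3, h'.central_C3]; done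
    | apply LinearMap.map_lie_swap
      simp [ehvFam, apply_ite (h.linearEquiv h'), h.lie_LJ, h'.lie_LJ, h.lie_LG, h'.lie_LG,
        h.lie_JG, h'.lie_JG, h.central_C1, h'.central_C1, h.central_C2, h'.central_C2,
        h.central_C3, h'.central_C3]

def lieEquiv : 𝔏 ≃ₗ⁅ℂ⁆ 𝔏' :=
  { h.linearEquiv h' with map_lie' := h.linearEquiv_map_lie h' _ _ }

end linearEquiv

theorem rescale_G (h : IsExtHV α 1 0 Lg Jg Gg C1 C2 C3) (hα : ∀ m : ℤ, α + m ≠ 0) :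
    IsExtHV α 0 0 Lg Jg (fun m => (α + m) • Gg m) C1 C2 C3 where
  lie_LL := h.lie_LL
  lie_LJ := h.lie_LJ
  lie_JJ := h.lie_JJ
  lie_LG m n := by
    rw [lie_smul, h.lie_LG, smul_smul, smul_smul]
    congr 1
    push_cast
    ring
  lie_JG m n := by simp [h.lie_JG]
  lie_GG m n := by simp [h.lie_GG]
  central_C1 := h.central_C1
  central_C2 := h.central_C2
  central_C3 := h.central_C3
  basis_indep := by
    simpa only [ehvFam_smul_ehvFam, Pi.one_apply, one_smul, Units.smul_mk0] using
      h.basis_indep.units_smul (ehvFam 1 1 (fun m => Units.mk0 (α + m) (hα m)) 1 1 1)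
  basis_span := by
    simpa only [ehvFam_smul_ehvFam, Pi.one_apply, one_smul, Units.smul_mk0] using
      Module.Basis.units_smul_span_eq_top h.basis_span
        (w := ehvFam 1 1 (fun m => Units.mk0 (α + m) (hα m)) 1 1 1)

end IsExtHV

/-- Suppose `α ∈ ℂ` and `α ∉ ℤ`. Then the linear map
`φ₂ : 𝔏_{α,0,0} → 𝔏_{α,1,0}` defined on basis elements by `φ₂ (C i) = C i`,
`φ₂ (L m) = L m`, `φ₂ (J m) = J m` and `φ₂ (G m) = (α + m) • G m` is an isomorphism of
Lie algebras. -/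
theorem ehv_iso_alpha_not_int {𝔏 𝔏' : Type*} [LieRing 𝔏] [LieAlgebra ℂ 𝔏]
    [LieRing 𝔏'] [LieAlgebra ℂ 𝔏'] (α : ℂ) (hα : ∀ n : ℤ, α ≠ (n : ℂ))
    (Lg Jg Gg : ℤ → 𝔏) (C1 C2 C3 : 𝔏) (Lg' Jg' Gg' : ℤ → 𝔏') (C1' C2' C3' : 𝔏')
    (h : IsExtHV α 0 0 Lg Jg Gg C1 C2 C3)
    (h' : IsExtHV α 1 0 Lg' Jg' Gg' C1' C2' C3') :
    ∃ e : 𝔏 ≃ₗ⁅ℂ⁆ 𝔏',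
      (∀ m : ℤ, e (Lg m) = Lg' m) ∧
      (∀ m : ℤ, e (Jg m) = Jg' m) ∧
      (∀ m : ℤ, e (Gg m) = (α + (m : ℂ)) • Gg' m) ∧
      e C1 = C1' ∧ e C2 = C2' ∧ e C3 = C3' := by
  have hα' : ∀ m : ℤ, α + m ≠ 0 := fun m hm => hα (-m) (by push_cast; linear_combination hm)
  have h'' := h'.rescale_G hα'
  exact ⟨h.lieEquiv h'', h.linearEquiv_L h'', h.linearEquiv_J h'', h.linearEquiv_G h'',
    h.linearEquiv_C1 h'', h.linearEquiv_C2 h'', h.linearEquiv_C3 h''⟩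
end
end

section
/- Assume α + n + mβ ≠ 0 for all m ∈ ℤ and all n ∈ ℤ with n ≠ 0. Let S be a simple module over the extended Heisenberg–Virasoro algebra 𝔏 = 𝔏_{α,β,F}, and suppose there exists k ∈ ℤ_{≥0} such that G_i, J_i, L_i act locally finitely on S for all i ≥ k. Then there exist k', l', m' ∈ ℤ_{≥0} and a nonzero vector v ∈ S such that G_{k'+i} v = J_{l'+i} v = L_{m'+i} v = 0 for all i ∈ ℤ_{≥0}. -/
noncomputable section

open scoped BigOperators

/-!
Fix `u ≠ 0`, `m = k + 1` and `N = k + 2`. For `x ∈ {L, J, G}` and `n ≥ N`, `x (n + m)` is a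
nonzero multiple of `⁅L m, x n⁆`, so local finiteness of `L m` makes `𝔭 u` finite dimensional,
where `𝔭` is the Lie algebra of operators spanned by the `x n`, `n ≥ N`. Modulo shorter words,
words in these operators commute, so a word applied to `u` in which some letter occurs more
often than the degree of its minimal polynomial at `u` reduces to shorter words; with finitely
many letters spanning `𝔭 u` this bounds the length of words needed, and `V = U(𝔭) u` is finite
dimensional. The restrictions of the `L n` to `V` are then linearly dependent, and bracketing a
dependence relation with one of its terms shortens it, until a single `L d` vanishes on `V`.
Hence `L R`, and then `J R` and `G R`, vanish on `V` for all large `R`; in particular on `u`.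
-/

attribute [local instance 100] LieRing.ofAssociativeRing

open Submodule Set

namespace Module.End

variable {K M : Type*} [Field K] [AddCommGroup M] [Module K M]

def IsLocallyFinite (f : Module.End K M) : Prop :=
  ∀ w : M, FiniteDimensional K (span K (range fun n : ℕ => (f ^ n) w))

lemma commutator_apply (f g : Module.End K M) (v : M) : ⁅f, g⁆ v = f (g v) - g (f v) := by
  rw [Ring.lie_def, LinearMap.sub_apply, Module.End.mul_apply, Module.End.mul_apply]

lemma apply_mem_of_mem_span {ι : Type*} {e : ι → Module.End K M} {A : Module.End K M}
    (hA : A ∈ span K (range e)) {v : M} {P : Submodule K M} (hP : ∀ i, e i v ∈ P) :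
    A v ∈ P :=
  span_le (p := P.comap (LinearMap.applyₗ v)).2 (by rintro _ ⟨i, rfl⟩; exact hP i) hA

end Module.End

lemma exists_finset_forall_mem_span_image {K M ι : Type*} [Field K] [AddCommGroup M] [Module K M]
    (v : ι → M) [FiniteDimensional K (span K (range v))] :
    ∃ s : Finset ι, ∀ i, v i ∈ span K (v '' s) := by
  classical
  obtain ⟨t, ht, hspan⟩ := (fg_span_iff_fg_span_finset_subset (range v)).1
    (Module.Finite.iff_fg (R := K).1 inferInstance)
  rw [← image_univ, Finset.subset_set_image_iff] at ht
  obtain ⟨s, -, rfl⟩ := ht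
  rw [Finset.coe_image] at hspan
  exact ⟨s, fun i => hspan ▸ subset_span (mem_range_self i)⟩

namespace Module.End.IsLocallyFinite

variable {K M : Type*} [Field K] [AddCommGroup M] [Module K M] {f : Module.End K M}

lemma exists_pow_apply_mem_span (hf : f.IsLocallyFinite) (w : M) :
    ∃ n, (f ^ n) w ∈ span K ((fun i => (f ^ i) w) '' Iio n) := by
  have := hf w
  obtain ⟨s, hs⟩ := exists_finset_forall_mem_span_image (K := K) fun n : ℕ => (f ^ n) w
  obtain ⟨n, hn⟩ := s.exists_nat_subset_range
  exact ⟨n, span_mono (image_mono fun i hi => by simpa using hn hi) (hs n)⟩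

lemma exists_le_finiteDimensional_invariant (hf : f.IsLocallyFinite) (X : Submodule K M)
    [FiniteDimensional K X] :
    ∃ Y : Submodule K M, X ≤ Y ∧ FiniteDimensional K Y ∧ ∀ v ∈ Y, f v ∈ Y := by
  obtain ⟨B, hB⟩ := Module.Finite.iff_fg (R := K).1 (inferInstance : FiniteDimensional K X)
  have := fun b => hf b
  refine ⟨⨆ b : B, span K (range fun n : ℕ => (f ^ n) b), ?_, inferInstance, ?_⟩
  · rw [← hB, span_le]
    intro b hb
    exact mem_iSup_of_mem ⟨b, hb⟩ (subset_span ⟨0, by simp⟩)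
  · suffices h : (⨆ b : B, span K (range fun n : ℕ => (f ^ n) b)) ≤
        (⨆ b : B, span K (range fun n : ℕ => (f ^ n) b)).comap f from fun v hv => h hv
    refine iSup_le fun b => span_le.2 ?_
    rintro _ ⟨n, rfl⟩
    exact mem_iSup_of_mem b (subset_span ⟨n + 1, by simp [pow_succ']⟩)

theorem finiteDimensional_span_range_apply (hf : f.IsLocallyFinite) {y : ℕ → Module.End K M}
    {m : ℕ} (hm : 0 < m) (hy : ∀ n, ∃ c : K, y (n + m) = c • ⁅f, y n⁆) (u : M) :
    FiniteDimensional K (span K (range fun n => y n u)) := by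
  obtain ⟨X, huX, _, hX⟩ := hf.exists_le_finiteDimensional_invariant (K ∙ u)
  obtain ⟨Z, hXZ, _, hZ⟩ := hf.exists_le_finiteDimensional_invariant (⨆ j : Fin m, X.map (y j))
  have key : ∀ n, ∀ x ∈ X, y n x ∈ Z := by
    intro n
    induction n using Nat.strong_induction_on with
    | _ n ih =>
      intro x hx
      by_cases hn : n < m
      · exact hXZ (mem_iSup_of_mem ⟨n, hn⟩ (mem_map_of_mem hx))
      · obtain ⟨n', rfl⟩ := Nat.exists_eq_add_of_le' (not_lt.1 hn)
        obtain ⟨c, hc⟩ := hy n'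
        rw [hc, LinearMap.smul_apply, commutator_apply]
        exact Z.smul_mem c (Z.sub_mem (hZ _ (ih n' (by omega) x hx))
          (ih n' (by omega) _ (hX x hx)))
  refine Submodule.finiteDimensional_of_le (S₂ := Z) (span_le.2 ?_)
  rintro _ ⟨n, rfl⟩
  exact key n u (huX (mem_span_singleton_self u))

end Module.End.IsLocallyFinite

section WordSpan

open Module.End

variable {K M κ : Type*} [Field K] [AddCommGroup M] [Module K M]

def wordSpan (e : κ → Module.End K M) (u : M) (t : ℕ) : Submodule K M :=
  span K ((fun w : List κ => (w.map e).prod u) '' {w | w.length < t})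

variable {e : κ → Module.End K M} {u : M}

lemma wordSpan_mono : Monotone (wordSpan e u) := fun _ _ h =>
  span_mono (image_mono fun _ hw => lt_of_lt_of_le hw h)

lemma prod_apply_mem_wordSpan (w : List κ) : (w.map e).prod u ∈ wordSpan e u (w.length + 1) :=
  subset_span ⟨w, Nat.lt_succ_self _, rfl⟩

lemma apply_mem_wordSpan_succ (q : κ) {t : ℕ} {v : M} (hv : v ∈ wordSpan e u t) :
    e q v ∈ wordSpan e u (t + 1) := by
  suffices h : wordSpan e u t ≤ (wordSpan e u (t + 1)).comap (e q) from h hv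
  refine span_le.2 ?_
  rintro _ ⟨w, hw, rfl⟩
  exact subset_span ⟨q :: w, by simpa using hw, by simp⟩

lemma prod_apply_mem_wordSpan_add (w : List κ) {t : ℕ} {v : M} (hv : v ∈ wordSpan e u t) :
    (w.map e).prod v ∈ wordSpan e u (t + w.length) := by
  induction w with
  | nil => simpa using hv
  | cons q w ih => simpa [← add_assoc] using apply_mem_wordSpan_succ q ih

instance [Finite κ] (t : ℕ) : FiniteDimensional K (wordSpan e u t) :=
  FiniteDimensional.span_of_finite K ((List.finite_length_lt κ t).image _)

variable (hcomm : ∀ p q t, ∀ v ∈ wordSpan e u t, ⁅e p, e q⁆ v ∈ wordSpan e u (t + 1))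
include hcomm

lemma sub_mem_wordSpan_of_perm {w w' : List κ} (h : w.Perm w') :
    (w.map e).prod u - (w'.map e).prod u ∈ wordSpan e u w.length := by
  induction h with
  | nil => simp
  | cons q _ ih => simpa [← map_sub] using apply_mem_wordSpan_succ q ih
  | swap p q w => simpa [commutator_apply] using hcomm q p _ _ (prod_apply_mem_wordSpan w)
  | trans h₁ _ ih₁ ih₂ =>
    have h := add_mem ih₁ (h₁.length_eq ▸ ih₂)
    rwa [sub_add_sub_cancel] at h

variable [Fintype κ] {n : κ → ℕ} (hn : ∀ q, (e q ^ n q) u ∈ wordSpan e u (n q))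
include hn

lemma wordSpan_succ_le {t : ℕ} (ht : ∑ q, n q < t) :
    wordSpan e u (t + 1) ≤ wordSpan e u t := by
  classical
  refine span_le.2 ?_
  rintro _ ⟨w, hw, rfl⟩
  rcases (Nat.lt_succ_iff.1 hw).lt_or_eq with hlt | hlen
  · exact subset_span ⟨w, hlt, rfl⟩
  -- Pigeonhole: some letter `q` occurs `n q` times in `w`; move these occurrences to the end.
  obtain ⟨q, hq⟩ : ∃ q, n q ≤ w.count q := by
    by_contra! h
    have hcount : ∑ q, w.count q = w.length := by
      simpa using Multiset.sum_count_eq_card (s := Finset.univ) (m := (w : Multiset κ)) (by simp)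
    have := Finset.sum_le_sum fun q (_ : q ∈ Finset.univ) => (h q).le
    omega
  obtain ⟨l, hl⟩ := (List.replicate_sublist_iff.2 hq).exists_perm_append
  have hperm : w.Perm (l ++ List.replicate (n q) q) := hl.trans List.perm_append_comm
  have hsorted : ((l ++ List.replicate (n q) q).map e).prod u ∈ wordSpan e u t := by
    rw [List.map_append, List.prod_append, List.map_replicate, List.prod_replicate, mul_apply,
      ← hlen, hperm.length_eq, List.length_append, List.length_replicate, add_comm]
    exact prod_apply_mem_wordSpan_add l (hn q)
  have h := add_mem (hlen ▸ sub_mem_wordSpan_of_perm hcomm hperm) hsorted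
  rwa [sub_add_cancel] at h

lemma wordSpan_le_wordSpan_sum (t : ℕ) :
    wordSpan e u t ≤ wordSpan e u (∑ q, n q + 1) := by
  induction t with
  | zero => exact wordSpan_mono (Nat.zero_le _)
  | succ t ih =>
    rcases le_or_gt (t + 1) (∑ q, n q + 1) with h | h
    · exact wordSpan_mono h
    · exact (wordSpan_succ_le hcomm hn (by omega)).trans ih

end WordSpan

section LieSpan

open Module.End

variable {K M ι : Type*} [Field K] [AddCommGroup M] [Module K M]
  {e : ι → Module.End K M} {u : M}

lemma apply_mem_wordSpan_succ_of_lie {s : Finset ι} (hlie : ∀ i j, ⁅e i, e j⁆ ∈ span K (range e))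
    (hs : ∀ i, e i u ∈ span K ((fun j => e j u) '' s)) (i : ι) {t : ℕ} {v : M}
    (hv : v ∈ wordSpan (fun q : s => e q) u t) :
    e i v ∈ wordSpan (fun q : s => e q) u (t + 1) := by
  induction t generalizing i v with
  | zero => simp_all [wordSpan]
  | succ t ih =>
    suffices h : wordSpan (fun q : s => e q) u (t + 1) ≤
        (wordSpan (fun q : s => e q) u (t + 2)).comap (e i) from h hv
    refine span_le.2 ?_
    rintro _ ⟨w, hw, rfl⟩
    cases w with
    | nil =>
      refine wordSpan_mono (by omega : 2 ≤ t + 2) (span_le.2 ?_ (hs i))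
      rintro _ ⟨j, hj, rfl⟩
      exact prod_apply_mem_wordSpan (e := fun q : s => e q) [⟨j, hj⟩]
    | cons q w =>
      have hw : (w.map fun q : s => e q).prod u ∈ wordSpan (fun q : s => e q) u t :=
        subset_span ⟨w, by simpa using hw, rfl⟩
      have hswap : ∀ x, e i (e q x) = e q (e i x) + ⁅e i, e q⁆ x := fun x => by
        rw [commutator_apply]; abel
      simp only [SetLike.mem_coe, mem_comap, List.map_cons, List.prod_cons, mul_apply]
      rw [hswap]
      exact add_mem (apply_mem_wordSpan_succ q (ih i hw))
        (wordSpan_mono (by omega) (apply_mem_of_mem_span (hlie i q) fun j => ih j hw))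

lemma apply_mem_span_range_prod_apply (i : ι) {v : M}
    (hv : v ∈ span K (range fun w : List ι => (w.map e).prod u)) :
    e i v ∈ span K (range fun w : List ι => (w.map e).prod u) := by
  suffices h : span K (range fun w : List ι => (w.map e).prod u) ≤
      (span K (range fun w : List ι => (w.map e).prod u)).comap (e i) from h hv
  refine span_le.2 ?_
  rintro _ ⟨w, rfl⟩
  exact subset_span ⟨i :: w, by simp only [List.map_cons, List.prod_cons, mul_apply]⟩

theorem finiteDimensional_span_range_prod_apply (hlie : ∀ i j, ⁅e i, e j⁆ ∈ span K (range e))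
    (hloc : ∀ i, (e i).IsLocallyFinite) [FiniteDimensional K (span K (range fun i => e i u))] :
    FiniteDimensional K (span K (range fun w : List ι => (w.map e).prod u)) := by
  obtain ⟨s, hs⟩ := exists_finset_forall_mem_span_image (K := K) fun i => e i u
  have happly := apply_mem_wordSpan_succ_of_lie (s := s) hlie hs
  have hcomm : ∀ (p q : s) t, ∀ v ∈ wordSpan (fun q : s => e q) u t,
      ⁅e p, e q⁆ v ∈ wordSpan (fun q : s => e q) u (t + 1) :=
    fun p q _ _ hv => apply_mem_of_mem_span (hlie p q) fun j => happly j hv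
  choose n hn using fun q : s => (hloc q).exists_pow_apply_mem_span u
  have hpow : ∀ q : s, (e q ^ n q) u ∈ wordSpan (fun q : s => e q) u (n q) := by
    refine fun q => span_le.2 ?_ (hn q)
    rintro _ ⟨j, hj, rfl⟩
    exact subset_span ⟨List.replicate j q, by simpa using hj, by simp⟩
  have hword (w : List ι) :
      (w.map e).prod u ∈ wordSpan (fun q : s => e q) u (w.length + 1) := by
    induction w with
    | nil => exact prod_apply_mem_wordSpan (e := fun q : s => e q) []
    | cons i w ih => exact happly i ih
  refine Submodule.finiteDimensional_of_le
    (S₂ := wordSpan (fun q : s => e q) u (∑ q, n q + 1)) (span_le.2 ?_)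
  rintro _ ⟨w, rfl⟩
  exact wordSpan_le_wordSpan_sum hcomm hpow _ (hword w)

end LieSpan

section Witt

open Module.End

variable {K M : Type*} [Field K] [CharZero K] [AddCommGroup M] [Module K M]
  {ℓ : ℕ → Module.End K M} {N : ℕ} {V : Submodule K M}
  (hℓ : ∀ a b, N ≤ a → N ≤ b → ⁅ℓ a, ℓ b⁆ = ((a : K) - b) • ℓ (a + b))
  (hV : ∀ a, N ≤ a → ∀ v ∈ V, ℓ a v ∈ V)
include hℓ hV

lemma exists_apply_eq_zero_of_sum_smul_apply_eq_zero (s : Finset ℕ) (c : ℕ) (g : ℕ → K)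
    (hc : N ≤ c) (hne : s.Nonempty) (hg : ∀ n ∈ s, g n ≠ 0)
    (hrel : ∀ v ∈ V, ∑ n ∈ s, g n • ℓ (c + n) v = 0) :
    ∃ d, N ≤ d ∧ ∀ v ∈ V, ℓ d v = 0 := by
  induction s using Finset.strongInduction generalizing c g with
  | H s ih =>
  obtain ⟨x, hx⟩ := hne
  rcases (s.erase x).eq_empty_or_nonempty with hs | hs
  · refine ⟨c + x, by omega, fun v hv => ?_⟩
    have := hrel v hv
    rw [(Finset.erase_eq_empty_iff s x).1 hs |>.resolve_left (Finset.ne_empty_of_mem hx),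
      Finset.sum_singleton] at this
    exact (smul_eq_zero.1 this).resolve_left (hg x hx)
  -- Bracketing the relation with its term `ℓ (c + x)` kills that term.
  refine ih _ (Finset.erase_ssubset hx) (c + x + c) (fun n => g n * ((x : K) - n)) (by omega) hs
    (fun n hn => mul_ne_zero (hg n (Finset.mem_of_mem_erase hn))
      (sub_ne_zero.2 (Nat.cast_injective.ne (Finset.ne_of_mem_erase hn).symm))) fun v hv => ?_
  have hbr : ∀ n ∈ s, (g n * ((x : K) - n)) • ℓ (c + x + c + n) v =
      g n • ⁅ℓ (c + x), ℓ (c + n)⁆ v := fun n _ => by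
    rw [hℓ _ _ (by omega) (by omega), mul_smul, ← add_assoc]
    push_cast
    rw [add_sub_add_left_eq_sub]
    rfl
  calc ∑ n ∈ s.erase x, (g n * ((x : K) - n)) • ℓ (c + x + c + n) v
      = ∑ n ∈ s, g n • ⁅ℓ (c + x), ℓ (c + n)⁆ v := by
        rw [Finset.sum_erase s (by simp), Finset.sum_congr rfl hbr]
    _ = ℓ (c + x) (∑ n ∈ s, g n • ℓ (c + n) v) - ∑ n ∈ s, g n • ℓ (c + n) (ℓ (c + x) v) := by
        simp [smul_sub, Finset.sum_sub_distrib]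
    _ = 0 := by rw [hrel v hv, hrel _ (hV _ (by omega) v hv), map_zero, sub_zero]

lemma apply_eq_zero_of_two_mul_lt {d : ℕ} (hd : N ≤ d) (h0 : ∀ v ∈ V, ℓ d v = 0) {R : ℕ}
    (hR : 2 * d < R) {v : M} (hv : v ∈ V) : ℓ R v = 0 := by
  obtain ⟨b, rfl⟩ : ∃ b, R = b + d := ⟨R - d, by omega⟩
  have h := congr($(hℓ b d (by omega) hd) v)
  rw [commutator_apply, h0 v hv, h0 _ (hV b (by omega) v hv), map_zero, sub_zero,
    LinearMap.smul_apply] at h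
  refine (smul_eq_zero.1 h.symm).resolve_left (sub_ne_zero.2 ?_)
  exact Nat.cast_injective.ne (by omega)

theorem exists_forall_ge_apply_eq_zero [FiniteDimensional K V] :
    ∃ T, ∀ R, T ≤ R → ∀ v ∈ V, ℓ R v = 0 := by
  classical
  let φ : ℕ → Module.End K V := fun n => (ℓ (N + n)).restrict (hV (N + n) (by omega))
  obtain ⟨s, g, hsum, n₀, hn₀, hg₀⟩ :=
    not_linearIndependent_iff.1 (Module.Finite.not_linearIndependent_of_infinite (R := K) φ)
  have hrel : ∀ v ∈ V, ∑ n ∈ s.filter (g · ≠ 0), g n • ℓ (N + n) v = 0 := fun v hv => by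
    rw [Finset.sum_filter_of_ne fun n _ h => left_ne_zero_of_smul h]
    simpa [φ] using congr(($hsum ⟨v, hv⟩ : M))
  obtain ⟨d, hd, h0⟩ := exists_apply_eq_zero_of_sum_smul_apply_eq_zero hℓ hV
    (s.filter (g · ≠ 0)) N g le_rfl ⟨n₀, by simp [hn₀, hg₀]⟩ (by simp) hrel
  exact ⟨2 * d + 1, fun R hR v hv => apply_eq_zero_of_two_mul_lt hℓ hV hd h0 (by omega) hv⟩

theorem exists_forall_ge_apply_eq_zero_of_eq_smul_lie [FiniteDimensional K V] {κ : Type*}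
    {x : κ → ℕ → Module.End K M}
    (hx : ∀ f a, N < a → ∃ c : K, x f (N + a) = c • ⁅ℓ a, x f N⁆)
    (hxV : ∀ f, ∀ v ∈ V, x f N v ∈ V) : ∃ T, ∀ f R, T ≤ R → ∀ v ∈ V, x f R v = 0 := by
  obtain ⟨T, hT⟩ := exists_forall_ge_apply_eq_zero hℓ hV
  refine ⟨N + max T (N + 1), fun f R hR v hv => ?_⟩
  obtain ⟨a, rfl⟩ : ∃ a, R = N + a := ⟨R - N, by omega⟩
  obtain ⟨c, hc⟩ := hx f a (by omega)
  rw [hc, LinearMap.smul_apply, commutator_apply, hT a (by omega) _ (hxV f v hv),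
    hT a (by omega) v hv, map_zero, sub_zero, smul_zero]

end Witt

section PositivePart

open Module.End

variable {K M : Type*} [Field K] [CharZero K] [AddCommGroup M] [Module K M]

theorem exists_forall_ge_apply_eq_zero_of_isLocallyFinite {κ : Type*} [Finite κ]
    {x : κ → ℕ → Module.End K M} (f₀ : κ) (k : ℕ)
    (hwitt : ∀ a b, 0 < a → 0 < b → ⁅x f₀ a, x f₀ b⁆ = ((a : K) - b) • x f₀ (a + b))
    (hraise : ∀ f a b, 0 < a → 0 < b → a ≠ b → ∃ c : K, x f (b + a) = c • ⁅x f₀ a, x f b⁆)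
    (hlie : ∀ f g a b, 0 < a → 0 < b → ⁅x f a, x g b⁆ ∈ span K (range fun h => x h (a + b)))
    (hloc : ∀ f n, k ≤ n → (x f n).IsLocallyFinite) (u : M) :
    ∃ T, ∀ f R, T ≤ R → x f R u = 0 := by
  obtain ⟨N, hN⟩ : ∃ N, N = k + 2 := ⟨_, rfl⟩
  let e : κ × ℕ → Module.End K M := fun p => x p.1 (N + p.2)
  have htail (f : κ) : FiniteDimensional K (span K (range fun n => x f (N + n) u)) :=
    (hloc f₀ (k + 1) (by omega)).finiteDimensional_span_range_apply (m := k + 1) (by omega)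
      (fun n : ℕ => by
        simpa [add_assoc] using hraise f (k + 1) (N + n) (by omega) (by omega) (by omega)) u
  have : FiniteDimensional K (span K (range fun p => e p u)) :=
    Submodule.finiteDimensional_of_le (S₂ := ⨆ f, span K (range fun n => x f (N + n) u))
      (span_le.2 (by rintro _ ⟨⟨f, n⟩, rfl⟩; exact mem_iSup_of_mem f (subset_span ⟨n, rfl⟩)))
  have hlie' (p q : κ × ℕ) : ⁅e p, e q⁆ ∈ span K (range e) := by
    refine span_mono ?_ (hlie p.1 q.1 (N + p.2) (N + q.2) (by omega) (by omega))
    rintro _ ⟨h, rfl⟩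
    exact ⟨(h, p.2 + (N + q.2)), by simp [e, add_assoc]⟩
  have := finiteDimensional_span_range_prod_apply (u := u) hlie' fun p =>
    hloc p.1 (N + p.2) (by omega)
  set V := span K (range fun w : List (κ × ℕ) => (w.map e).prod u)
  have hinv : ∀ f a, N ≤ a → ∀ v ∈ V, x f a v ∈ V := fun f a ha v hv => by
    obtain ⟨n, rfl⟩ := Nat.exists_eq_add_of_le ha
    exact apply_mem_span_range_prod_apply (f, n) hv
  obtain ⟨T, hT⟩ := exists_forall_ge_apply_eq_zero_of_eq_smul_lie
    (fun a b ha hb => hwitt a b (by omega) (by omega)) (hinv f₀)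
    (fun f a ha => hraise f a N (by omega) (by omega) (by omega)) fun f => hinv f N le_rfl
  exact ⟨T, fun f R hR => hT f R hR u (subset_span ⟨[], by simp⟩)⟩

end PositivePart

namespace IsExtHV

variable {𝔏 : Type*} [LieRing 𝔏] [LieAlgebra ℂ 𝔏] {α β F : ℂ} {Lg Jg Gg : ℤ → 𝔏} {C1 C2 C3 : 𝔏}
  (h : IsExtHV α β F Lg Jg Gg C1 C2 C3) {A : Type*} [LieRing A] [LieAlgebra ℂ A]
  (ρ : 𝔏 →ₗ⁅ℂ⁆ A)
include h

lemma lie_Lg_Lg_of_pos {a b : ℕ} (ha : 0 < a) (hb : 0 < b) :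
    ⁅ρ (Lg a), ρ (Lg b)⁆ = ((a : ℂ) - b) • ρ (Lg ↑(a + b)) := by
  rw [← LieHom.map_lie, h.lie_LL, if_neg (by omega), add_zero, map_smul]
  push_cast
  rfl

lemma lie_mem_span_range (f g : Fin 3) {a b : ℕ} (ha : 0 < a) (hb : 0 < b) :
    ⁅ρ (![Lg, Jg, Gg] f a), ρ (![Lg, Jg, Gg] g b)⁆ ∈
      span ℂ (range fun i => ρ (![Lg, Jg, Gg] i ↑(a + b))) := by
  suffices ∃ (i : Fin 3) (c : ℂ), ⁅![Lg, Jg, Gg] f a, ![Lg, Jg, Gg] g b⁆ =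
      c • ![Lg, Jg, Gg] i ↑(a + b) by
    obtain ⟨i, c, hc⟩ := this
    rw [← LieHom.map_lie, hc, map_smul]
    exact smul_mem _ c (subset_span ⟨i, rfl⟩)
  have hab : (a : ℤ) + b ≠ 0 := by omega
  fin_cases f <;> fin_cases g
  · exact ⟨0, (a : ℂ) - b, by simp [h.lie_LL, hab]⟩
  · exact ⟨1, -(b : ℂ), by simp [h.lie_LJ, hab]⟩
  · exact ⟨2, -(α + b + a * β), by simp [h.lie_LG]⟩
  · exact ⟨1, (a : ℂ), by simp [← lie_skew (Jg _), h.lie_LJ, hab, add_comm]⟩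
  · exact ⟨1, 0, by simp [h.lie_JJ, hab]⟩
  · exact ⟨2, F, by simp [h.lie_JG]⟩
  · exact ⟨2, α + a + b * β, by simp [← lie_skew (Gg _), h.lie_LG, add_comm]; module⟩
  · exact ⟨2, -F, by simp [← lie_skew (Gg _), h.lie_JG, add_comm]⟩
  · exact ⟨2, 0, by simp [h.lie_GG]⟩

lemma exists_eq_smul_lie (hαβ : ∀ m n : ℤ, n ≠ 0 → α + (n : ℂ) + (m : ℂ) * β ≠ 0) (f : Fin 3)
    {a b : ℕ} (ha : 0 < a) (hb : 0 < b) (hab : a ≠ b) :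
    ∃ c : ℂ, ρ (![Lg, Jg, Gg] f ↑(b + a)) = c • ⁅ρ (Lg a), ρ (![Lg, Jg, Gg] f b)⁆ := by
  suffices ∃ c : ℂ, c ≠ 0 ∧ ⁅Lg a, ![Lg, Jg, Gg] f b⁆ = c • ![Lg, Jg, Gg] f ↑(b + a) by
    obtain ⟨c, hc, heq⟩ := this
    exact ⟨c⁻¹, by rw [← LieHom.map_lie, heq, map_smul, inv_smul_smul₀ hc]⟩
  have hab' : (a : ℤ) + b ≠ 0 := by omega
  fin_cases f
  · refine ⟨(a : ℂ) - b, sub_ne_zero.2 (Nat.cast_injective.ne hab), ?_⟩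
    simp [h.lie_LL, hab', add_comm]
  · refine ⟨-(b : ℂ), by simp; omega, ?_⟩
    simp [h.lie_LJ, hab', add_comm]
  · refine ⟨-(α + b + a * β), neg_ne_zero.2 (by simpa using hαβ a b (by omega)), ?_⟩
    simp [h.lie_LG, add_comm]

end IsExtHV

theorem ehv_locally_finite_implies_whittaker_vector_general {𝔏 : Type*} [LieRing 𝔏]
    [LieAlgebra ℂ 𝔏] (α β F : ℂ) (Lg Jg Gg : ℤ → 𝔏) (C1 C2 C3 : 𝔏)
    (hEHV : IsExtHV α β F Lg Jg Gg C1 C2 C3)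
    (hαβ : ∀ m n : ℤ, n ≠ 0 → α + (n : ℂ) + (m : ℂ) * β ≠ 0)
    (S : Type) [AddCommGroup S] [Module ℂ S] (ρ : 𝔏 →ₗ⁅ℂ⁆ Module.End ℂ S)
    -- `S` is a simple `𝔏`-module:
    (hSne : ∃ s : S, s ≠ 0)
    -- `G i, J i, L i` act locally finitely on `S` for all `i ≥ k`:
    (k : ℕ)
    (hlf : ∀ i : ℤ, (k : ℤ) ≤ i → ∀ w : S,
      FiniteDimensional ℂ
        ↥(Submodule.span ℂ (Set.range fun n : ℕ => (ρ (Gg i) ^ n) w)) ∧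
      FiniteDimensional ℂ
        ↥(Submodule.span ℂ (Set.range fun n : ℕ => (ρ (Jg i) ^ n) w)) ∧
      FiniteDimensional ℂ
        ↥(Submodule.span ℂ (Set.range fun n : ℕ => (ρ (Lg i) ^ n) w))) :
    ∃ (k' l' m' : ℕ) (v : S), v ≠ 0 ∧
      ∀ i : ℕ, ρ (Gg ((k' : ℤ) + i)) v = 0 ∧ ρ (Jg ((l' : ℤ) + i)) v = 0 ∧
        ρ (Lg ((m' : ℤ) + i)) v = 0 := by
  obtain ⟨u, hu⟩ := hSne
  have hloc (f : Fin 3) (n : ℕ) (hn : k ≤ n) : (ρ (![Lg, Jg, Gg] f n)).IsLocallyFinite := by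
    fin_cases f
    exacts [fun w => (hlf n (by omega) w).2.2, fun w => (hlf n (by omega) w).2.1,
      fun w => (hlf n (by omega) w).1]
  obtain ⟨T, hT⟩ := exists_forall_ge_apply_eq_zero_of_isLocallyFinite
    (x := fun f n => ρ (![Lg, Jg, Gg] f n)) 0 k (fun _ _ => hEHV.lie_Lg_Lg_of_pos ρ)
    (fun f _ _ => hEHV.exists_eq_smul_lie ρ hαβ f) (fun f g _ _ => hEHV.lie_mem_span_range ρ f g)
    hloc u
  refine ⟨T, T, T, u, hu, fun i => ?_⟩
  simpa using And.intro (hT 2 (T + i) le_self_add) (And.intro (hT 1 (T + i) le_self_add)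
    (hT 0 (T + i) le_self_add))

/-- (1) ⇒ (5) of Theorem `eqchar`. Assume `α + n + mβ ≠ 0` for all
`m ∈ ℤ` and all `n ∈ ℤ` with `n ≠ 0`. Let `S` be a simple module over the extended
Heisenberg–Virasoro algebra `𝔏 = 𝔏_{α,β,F}` and suppose there exists `k ∈ ℤ_{≥0}` such
that `G i, J i, L i` act locally finitely on `S` for all `i ≥ k`. Then there exist
`k', l', m' ∈ ℤ_{≥0}` and a nonzero `v ∈ S` such that
`G (k'+i) v = J (l'+i) v = L (m'+i) v = 0` for all `i ∈ ℤ_{≥0}`. -/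
theorem ehv_locally_finite_implies_whittaker_vector {𝔏 : Type*} [LieRing 𝔏]
    [LieAlgebra ℂ 𝔏] (α β F : ℂ) (Lg Jg Gg : ℤ → 𝔏) (C1 C2 C3 : 𝔏)
    (hEHV : IsExtHV α β F Lg Jg Gg C1 C2 C3)
    (hαβ : ∀ m n : ℤ, n ≠ 0 → α + (n : ℂ) + (m : ℂ) * β ≠ 0)
    (S : Type) [AddCommGroup S] [Module ℂ S] (ρ : 𝔏 →ₗ⁅ℂ⁆ Module.End ℂ S)
    -- `S` is a simple `𝔏`-module:
    (hSne : ∃ s : S, s ≠ 0)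
    (hSsimple : ∀ N : Submodule ℂ S, (∀ (x : 𝔏) (s : S), s ∈ N → ρ x s ∈ N) →
      N = ⊥ ∨ N = ⊤)
    -- `G i, J i, L i` act locally finitely on `S` for all `i ≥ k`:
    (k : ℕ)
    (hlf : ∀ i : ℤ, (k : ℤ) ≤ i → ∀ w : S,
      FiniteDimensional ℂ
        ↥(Submodule.span ℂ (Set.range fun n : ℕ => (ρ (Gg i) ^ n) w)) ∧
      FiniteDimensional ℂ
        ↥(Submodule.span ℂ (Set.range fun n : ℕ => (ρ (Jg i) ^ n) w)) ∧
      FiniteDimensional ℂ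
        ↥(Submodule.span ℂ (Set.range fun n : ℕ => (ρ (Lg i) ^ n) w))) :
    ∃ (k' l' m' : ℕ) (v : S), v ≠ 0 ∧
      ∀ i : ℕ, ρ (Gg ((k' : ℤ) + i)) v = 0 ∧ ρ (Jg ((l' : ℤ) + i)) v = 0 ∧
        ρ (Lg ((m' : ℤ) + i)) v = 0 :=
  ehv_locally_finite_implies_whittaker_vector_general α β F Lg Jg Gg C1 C2 C3 hEHV hαβ S ρ hSne k
    hlf
end
end

section
/- Let S be a simple module over the extended Heisenberg–Virasoro algebra 𝔏 = 𝔏_{α,β,F}, and suppose there exist k, l, m ∈ ℤ_{≥0} and a nonzero vector v ∈ S such that G_{k+i} v = J_{l+i} v = L_{m+i} v = 0 for all i ∈ ℤ_{≥0}. Then S is a restricted 𝔏-module, i.e., for every w ∈ S there exists N ∈ ℕ such that L_n w = J_n w = G_n w = 0 for all n ≥ N. -/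
noncomputable section

open scoped BigOperators

attribute [local instance 100] LieRing.ofAssociativeRing

/-!
The vectors killed by every `L n`, `J n`, `G n` with `n` large enough form a subspace `W`.
Bracketing `L n`, `J n`, `G n` with a basis vector of index `p` lands, for `n ≫ 0`, in the span of
`L (n + p)`, `J (n + p)`, `G (n + p)`, so `W` is stable under `𝔏`. It contains `v ≠ 0`,
hence `W = S` by simplicity.
-/

open Filter Submodule

section Restricted

variable {R 𝔏 S ι : Type*} [CommRing R] [LieRing 𝔏] [LieAlgebra R 𝔏]
  [AddCommGroup S] [Module R S]

def restrictedSubmodule (ρ : 𝔏 →ₗ⁅R⁆ Module.End R S) (f : ι → ℤ → 𝔏) : Submodule R S where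
  carrier := {w | ∀ᶠ n in atTop, ∀ i, ρ (f i n) w = 0}
  zero_mem' := Eventually.of_forall fun _ _ => map_zero _
  add_mem' hw hw' := (hw.and hw').mono fun _ h i => by rw [map_add, h.1 i, h.2 i, add_zero]
  smul_mem' c _ hw := hw.mono fun _ h i => by rw [map_smul, h i, smul_zero]

variable (R) in
def LieShiftsBy (f : ι → ℤ → 𝔏) (y : 𝔏) (p : ℤ) : Prop :=
  ∀ᶠ n in atTop, ∀ i, ⁅f i n, y⁆ ∈ span R (Set.range fun j => f j (n + p))

lemma smul_apply_mem_span_range (f : ι → ℤ → 𝔏) (c : R) (j : ι) (m : ℤ) :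
    c • f j m ∈ span R (Set.range fun j => f j m) :=
  smul_mem _ c (subset_span ⟨j, rfl⟩)

lemma LieShiftsBy.of_forall_lie_eq_zero {f : ι → ℤ → 𝔏} {y : 𝔏} (hy : ∀ x : 𝔏, ⁅y, x⁆ = 0)
    (p : ℤ) : LieShiftsBy R f y p :=
  Eventually.of_forall fun n i => by rw [← lie_skew, hy, neg_zero]; exact zero_mem _

lemma LieHom.apply_apply_eq_add_apply_lie (ρ : 𝔏 →ₗ⁅R⁆ Module.End R S) (x y : 𝔏) (w : S) :
    ρ x (ρ y w) = ρ y (ρ x w) + ρ ⁅x, y⁆ w := by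
  rw [ρ.map_lie, Ring.lie_def, LinearMap.sub_apply, Module.End.mul_apply, Module.End.mul_apply,
    add_sub_cancel]

lemma LieShiftsBy.apply_mem_restrictedSubmodule {ρ : 𝔏 →ₗ⁅R⁆ Module.End R S} {f : ι → ℤ → 𝔏} {y : 𝔏}
    {p : ℤ} (hy : LieShiftsBy R f y p) {w : S} (hw : w ∈ restrictedSubmodule ρ f) :
    ρ y w ∈ restrictedSubmodule ρ f := by
  have hw_shift : ∀ᶠ n in atTop, ∀ j, ρ (f j (n + p)) w = 0 :=
    (tendsto_atTop_add_const_right atTop p tendsto_id).eventually hw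
  filter_upwards [hw, hw_shift, hy] with n hn hn_shift hy_n i
  have hspan : span R (Set.range fun j => f j (n + p)) ≤
      LinearMap.ker ((LinearMap.applyₗ w).comp ρ.toLinearMap) :=
    span_le.2 <| Set.range_subset_iff.2 hn_shift
  rw [ρ.apply_apply_eq_add_apply_lie, hn i, map_zero, zero_add]
  exact hspan (hy_n i)

end Restricted

lemma forall_apply_mem_of_span_eq_top {R 𝔏 S : Type*} [CommRing R] [AddCommGroup 𝔏] [Module R 𝔏]
    [AddCommGroup S] [Module R S] (ρ : 𝔏 →ₗ[R] Module.End R S) {s : Set 𝔏}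
    (hs : span R s = ⊤) {W : Submodule R S} (h : ∀ y ∈ s, ∀ w ∈ W, ρ y w ∈ W) (x : 𝔏) :
    ∀ w ∈ W, ρ x w ∈ W :=
  (span_le (p := (compatibleMaps W W).comap ρ).2 h) (hs ▸ mem_top : x ∈ span R s)

lemma Int.eventually_atTop_of_forall_add_nat {P : ℤ → Prop} (k : ℕ) (h : ∀ i : ℕ, P (k + i)) :
    ∀ᶠ n in atTop, P n :=
  (eventually_ge_atTop (k : ℤ)).mono fun n hn => by
    have := h (n - k).toNat
    rwa [Int.toNat_of_nonneg (sub_nonneg.2 hn), add_sub_cancel] at this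

namespace IsExtHV

variable {𝔏 : Type*} [LieRing 𝔏] [LieAlgebra ℂ 𝔏] {α β F : ℂ} {Lg Jg Gg : ℤ → 𝔏}
  {C1 C2 C3 : 𝔏}

lemma lieShiftsBy_L (hEHV : IsExtHV α β F Lg Jg Gg C1 C2 C3) (p : ℤ) :
    LieShiftsBy ℂ ![Lg, Jg, Gg] (Lg p) p := by
  filter_upwards [eventually_gt_atTop (-p)] with n hn i
  have hnp : n + p ≠ 0 := by omega
  have hpn : p + n ≠ 0 := by omega
  fin_cases i
  · show ⁅Lg n, Lg p⁆ ∈ _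
    rw [hEHV.lie_LL, if_neg hnp, add_zero]
    exact smul_apply_mem_span_range _ _ 0 _
  · show ⁅Jg n, Lg p⁆ ∈ _
    rw [← lie_skew, hEHV.lie_LJ, if_neg hpn, sub_zero, add_comm p, ← neg_smul]
    exact smul_apply_mem_span_range _ _ 1 _
  · show ⁅Gg n, Lg p⁆ ∈ _
    rw [← lie_skew, hEHV.lie_LG, add_comm p, ← neg_smul]
    exact smul_apply_mem_span_range _ _ 2 _

lemma lieShiftsBy_J (hEHV : IsExtHV α β F Lg Jg Gg C1 C2 C3) (p : ℤ) :
    LieShiftsBy ℂ ![Lg, Jg, Gg] (Jg p) p := by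
  filter_upwards [eventually_gt_atTop (-p)] with n hn i
  have hnp : n + p ≠ 0 := by omega
  fin_cases i
  · show ⁅Lg n, Jg p⁆ ∈ _
    rw [hEHV.lie_LJ, if_neg hnp, sub_zero]
    exact smul_apply_mem_span_range _ _ 1 _
  · show ⁅Jg n, Jg p⁆ ∈ _
    rw [hEHV.lie_JJ, if_neg hnp]
    exact zero_mem _
  · show ⁅Gg n, Jg p⁆ ∈ _
    rw [← lie_skew, hEHV.lie_JG, add_comm p, ← neg_smul]
    exact smul_apply_mem_span_range _ _ 2 _

lemma lieShiftsBy_G (hEHV : IsExtHV α β F Lg Jg Gg C1 C2 C3) (p : ℤ) :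
    LieShiftsBy ℂ ![Lg, Jg, Gg] (Gg p) p := by
  refine Eventually.of_forall fun n i => ?_
  fin_cases i
  · show ⁅Lg n, Gg p⁆ ∈ _
    rw [hEHV.lie_LG]
    exact smul_apply_mem_span_range _ _ 2 _
  · show ⁅Jg n, Gg p⁆ ∈ _
    rw [hEHV.lie_JG]
    exact smul_apply_mem_span_range _ _ 2 _
  · show ⁅Gg n, Gg p⁆ ∈ _
    rw [hEHV.lie_GG]
    exact zero_mem _

lemma exists_lieShiftsBy_ehvFam (hEHV : IsExtHV α β F Lg Jg Gg C1 C2 C3)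
    (i : (Fin 3 × ℤ) ⊕ Fin 3) :
    ∃ p, LieShiftsBy ℂ ![Lg, Jg, Gg] (ehvFam Lg Jg Gg C1 C2 C3 i) p := by
  rcases i with ⟨t, p⟩ | c
  · fin_cases t
    exacts [⟨p, hEHV.lieShiftsBy_L p⟩, ⟨p, hEHV.lieShiftsBy_J p⟩, ⟨p, hEHV.lieShiftsBy_G p⟩]
  · fin_cases c
    exacts [⟨0, .of_forall_lie_eq_zero hEHV.central_C1 0⟩,
      ⟨0, .of_forall_lie_eq_zero hEHV.central_C2 0⟩, ⟨0, .of_forall_lie_eq_zero hEHV.central_C3 0⟩]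

lemma apply_mem_restrictedSubmodule {S : Type*} [AddCommGroup S] [Module ℂ S]
    (hEHV : IsExtHV α β F Lg Jg Gg C1 C2 C3) (ρ : 𝔏 →ₗ⁅ℂ⁆ Module.End ℂ S) (x : 𝔏) :
    ∀ w ∈ restrictedSubmodule ρ ![Lg, Jg, Gg], ρ x w ∈ restrictedSubmodule ρ ![Lg, Jg, Gg] :=
  forall_apply_mem_of_span_eq_top ρ.toLinearMap hEHV.basis_span (by
    rintro _ ⟨i, rfl⟩ w hw
    obtain ⟨p, hp⟩ := hEHV.exists_lieShiftsBy_ehvFam i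
    exact hp.apply_mem_restrictedSubmodule hw) x

end IsExtHV

theorem ehv_whittaker_vector_implies_restricted_general {𝔏 : Type*} [LieRing 𝔏]
    [LieAlgebra ℂ 𝔏] (α β F : ℂ) (Lg Jg Gg : ℤ → 𝔏) (C1 C2 C3 : 𝔏)
    (hEHV : IsExtHV α β F Lg Jg Gg C1 C2 C3)
    (S : Type) [AddCommGroup S] [Module ℂ S] (ρ : 𝔏 →ₗ⁅ℂ⁆ Module.End ℂ S)
    -- `S` is a simple `𝔏`-module:
    (hSsimple : ∀ N : Submodule ℂ S, (∀ (x : 𝔏) (s : S), s ∈ N → ρ x s ∈ N) →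
      N = ⊥ ∨ N = ⊤)
    (k l m : ℕ) (v : S) (hv : v ≠ 0)
    (hann : ∀ i : ℕ, ρ (Gg ((k : ℤ) + i)) v = 0 ∧ ρ (Jg ((l : ℤ) + i)) v = 0 ∧
      ρ (Lg ((m : ℤ) + i)) v = 0) :
    ∀ w : S, ∃ N : ℕ, ∀ n : ℤ, (N : ℤ) ≤ n →
      ρ (Lg n) w = 0 ∧ ρ (Jg n) w = 0 ∧ ρ (Gg n) w = 0 := by
  set W := restrictedSubmodule ρ ![Lg, Jg, Gg]
  have hvW : v ∈ W := by
    have hL := Int.eventually_atTop_of_forall_add_nat (P := fun n => ρ (Lg n) v = 0) m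
      fun i => (hann i).2.2
    have hJ := Int.eventually_atTop_of_forall_add_nat (P := fun n => ρ (Jg n) v = 0) l
      fun i => (hann i).2.1
    have hG := Int.eventually_atTop_of_forall_add_nat (P := fun n => ρ (Gg n) v = 0) k
      fun i => (hann i).1
    filter_upwards [hL, hJ, hG] with n hLn hJn hGn i
    fin_cases i
    exacts [hLn, hJn, hGn]
  have hW : W = ⊤ := (hSsimple W (hEHV.apply_mem_restrictedSubmodule ρ)).resolve_left
    fun h => hv ((mem_bot ℂ).1 (h ▸ hvW))
  intro w
  obtain ⟨N, hN⟩ := eventually_atTop.1 (hW ▸ mem_top : w ∈ W)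
  refine ⟨N.toNat, fun n hn => ?_⟩
  have hw := hN n ((Int.self_le_toNat N).trans hn)
  exact ⟨hw 0, hw 1, hw 2⟩

/-- (5) ⇒ (6) of Theorem `eqchar`. Let `S` be a simple module over the
extended Heisenberg–Virasoro algebra `𝔏 = 𝔏_{α,β,F}` and suppose there exist
`k, l, m ∈ ℤ_{≥0}` and a nonzero `v ∈ S` such that
`G (k+i) v = J (l+i) v = L (m+i) v = 0` for all `i ∈ ℤ_{≥0}`. Then `S` is a restricted
`𝔏`-module. -/
theorem ehv_whittaker_vector_implies_restricted {𝔏 : Type*} [LieRing 𝔏]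
    [LieAlgebra ℂ 𝔏] (α β F : ℂ) (Lg Jg Gg : ℤ → 𝔏) (C1 C2 C3 : 𝔏)
    (hEHV : IsExtHV α β F Lg Jg Gg C1 C2 C3)
    (S : Type) [AddCommGroup S] [Module ℂ S] (ρ : 𝔏 →ₗ⁅ℂ⁆ Module.End ℂ S)
    -- `S` is a simple `𝔏`-module:
    (hSne : ∃ s : S, s ≠ 0)
    (hSsimple : ∀ N : Submodule ℂ S, (∀ (x : 𝔏) (s : S), s ∈ N → ρ x s ∈ N) →
      N = ⊥ ∨ N = ⊤)
    (k l m : ℕ) (v : S) (hv : v ≠ 0)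
    (hann : ∀ i : ℕ, ρ (Gg ((k : ℤ) + i)) v = 0 ∧ ρ (Jg ((l : ℤ) + i)) v = 0 ∧
      ρ (Lg ((m : ℤ) + i)) v = 0) :
    ∀ w : S, ∃ N : ℕ, ∀ n : ℤ, (N : ℤ) ≤ n →
      ρ (Lg n) w = 0 ∧ ρ (Jg n) w = 0 ∧ ρ (Gg n) w = 0 :=
  ehv_whittaker_vector_implies_restricted_general α β F Lg Jg Gg C1 C2 C3 hEHV S ρ hSsimple k l m v
    hv hann
end
end
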